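/- arXiv:1308.0083 — 6 statements merged into one kernel-verified Lean document; each statement's English description precedes it below -/
import Mathlib

section
/- An allocation A_il to user i on server l is non-wasteful if and only if there exists a scalar g ≥ 0 such that A_il = g · d_i, where d_i is user i's normalized demand vector; moreover, in this case g equals the global dominant share G_il(A_il) = min_r A_ilr / d_ir. -/
/-- An allocation `A` to user `i` on a server is non-wasteful iff
`A = g • d_i` for some scalar `g ≥ 0`, where `d_i r = D r / D rs` is the normalized
demand; moreover `g` equals the global dominant share `min_r A r / d_i r`. -/
theorem stmt1 {R : Type*} [Fintype R] [Nonempty R]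
    (D : R → ℝ) (hD : ∀ r, 0 < D r)
    (rs : R) (hrs : ∀ r, D r ≤ D rs)
    (A : R → ℝ) (hA : ∀ r, 0 ≤ A r) :
    (∀ A' : R → ℝ, (∀ r, A' r ≤ A r) → (∃ r0, A' r0 < A r0) →
        Finset.univ.inf' Finset.univ_nonempty (fun r => A' r / D r) <
          Finset.univ.inf' Finset.univ_nonempty (fun r => A r / D r))
    ↔ ∃ g : ℝ, 0 ≤ g ∧ (∀ r, A r = g * (D r / D rs)) ∧
        g = Finset.univ.inf' Finset.univ_nonempty (fun r => A r / (D r / D rs)) := by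
  classical
  have hDne : ∀ r, D r ≠ 0 := fun r => (hD r).ne'
  constructor
  · intro h
    set N : ℝ := Finset.univ.inf' Finset.univ_nonempty (fun r => A r / D r) with hNdef
    have hNle : ∀ r, N ≤ A r / D r := fun r =>
      Finset.inf'_le _ (Finset.mem_univ r)
    have hNnn : 0 ≤ N := by
      apply Finset.le_inf'
      intro r _
      exact div_nonneg (hA r) (hD r).le
    have hAeq : ∀ r, A r = N * D r := by
      intro r0
      by_contra hne
      have hle' : N * D r0 ≤ A r0 := (le_div_iff₀ (hD r0)).mp (hNle r0)
      have hlt : N * D r0 < A r0 := lt_of_le_of_ne hle' (fun h' => hne h'.symm)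
      set A' : R → ℝ := Function.update A r0 (N * D r0) with hA'
      have hle : ∀ r, A' r ≤ A r := by
        intro r
        by_cases hr : r = r0
        · subst hr; simp [hA', hlt.le]
        · simp [hA', Function.update_of_ne hr]
      have hstrict : ∃ r1, A' r1 < A r1 := ⟨r0, by simp [hA', hlt]⟩
      have hless := h A' hle hstrict
      have hge : N ≤ Finset.univ.inf' Finset.univ_nonempty (fun r => A' r / D r) := by
        apply Finset.le_inf'
        intro r _
        by_cases hr : r = r0
        · subst hr
          simp [hA', mul_div_assoc, div_self (hDne r)]
        · rw [show A' r = A r by simp [hA', Function.update_of_ne hr]]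
          exact hNle r
      exact absurd hless (not_lt_of_ge hge)
    refine ⟨N * D rs, mul_nonneg hNnn (hD rs).le, ?_, ?_⟩
    · intro r
      rw [hAeq r]
      field_simp [hDne r, hDne rs]
    · have : (fun r => A r / (D r / D rs)) = fun _ => N * D rs := by
        funext r
        rw [hAeq r]
        field_simp [hDne r, hDne rs]
      rw [this, Finset.inf'_const]
  · rintro ⟨g, hg0, hAr, hge⟩
    intro A' hle ⟨r0, hlt⟩
    have hAD : ∀ r, A r / D r = g / D rs := by
      intro r
      rw [hAr r]
      field_simp [hDne r, hDne rs]
    have hconst : (fun r => A r / D r) = fun _ => g / D rs := funext hAD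
    have hinfA : Finset.univ.inf' Finset.univ_nonempty (fun r => A r / D r) = g / D rs := by
      rw [hconst, Finset.inf'_const]
    rw [hinfA]
    have h1 : Finset.univ.inf' (α := ℝ) Finset.univ_nonempty (fun r => A' r / D r)
        ≤ A' r0 / D r0 := Finset.inf'_le _ (Finset.mem_univ r0)
    have h2 : A' r0 / D r0 < A r0 / D r0 := by gcongr; exact hD r0
    exact lt_of_le_of_lt h1 (h2.trans_eq (hAD r0))
end

section
/- The DRFH allocation is envy-free: if {g_il} solves the max-min program maximizing min_i Σ_l g_il subject to Σ_i g_il d_ir ≤ c_lr for all servers l and resources r, with resulting allocations A_il = g_il d_i, then for any two users i and j, G_i(A_j) ≤ G_i(A_i), where G_i(A) = Σ_l min_r A_lr / d_ir. -/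
/-- Envy-freeness of DRFH: if `{g i l}` solves the max-min program,
with allocations `A i l r = g i l * d i r`, then for any users `i, j`,
`G_i(A_j) ≤ G_i(A_i)`, where `G_i(B) = Σ_l min_r B l r / d i r`. -/
theorem stmt5 {U S R : Type*} [Fintype U] [Nonempty U] [Fintype S] [Nonempty S]
    [Fintype R] [Nonempty R]
    (d : U → R → ℝ) (hd : ∀ i r, 0 < d i r) (hd1 : ∀ i r, d i r ≤ 1)
    (hdmax : ∀ i, ∃ r, d i r = 1)
    (c : S → R → ℝ)
    (g : U → S → ℝ) (hg : ∀ i l, 0 ≤ g i l)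
    (hfeas : ∀ l r, ∑ i, g i l * d i r ≤ c l r)
    (hopt : ∀ g' : U → S → ℝ, (∀ i l, 0 ≤ g' i l) →
      (∀ l r, ∑ i, g' i l * d i r ≤ c l r) →
      Finset.univ.inf' Finset.univ_nonempty (fun i => ∑ l, g' i l) ≤
        Finset.univ.inf' Finset.univ_nonempty (fun i => ∑ l, g i l))
    (i j : U) :
    ∑ l, Finset.univ.inf' Finset.univ_nonempty (fun r => (g j l * d j r) / d i r) ≤
      ∑ l, Finset.univ.inf' Finset.univ_nonempty (fun r => (g i l * d i r) / d i r) := by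
  classical
  set μ : ℝ := Finset.univ.inf' Finset.univ_nonempty (fun k => ∑ l, g k l) with hμ
  -- Key: every user's total is at most the minimum total (so all totals are equal).
  have key : ∀ p : U, (∑ l, g p l) ≤ μ := by
    intro p
    by_contra hlt
    push_neg at hlt
    have hμ0 : 0 ≤ μ := by
      rw [hμ]
      exact Finset.le_inf' _ _ fun k _ => Finset.sum_nonneg fun l _ => hg k l
    have hTp : 0 < ∑ l, g p l := lt_of_le_of_lt hμ0 hlt
    obtain ⟨l0, _, hl0⟩ : ∃ l ∈ Finset.univ, (0:ℝ) < g p l := by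
      by_contra h
      push_neg at h
      have : (∑ l, g p l) ≤ 0 := Finset.sum_nonpos fun l hl => h l hl
      linarith
    set N : ℝ := (Fintype.card U : ℝ) with hN
    have hN0 : 0 < N := by
      rw [hN]; exact_mod_cast Fintype.card_pos
    set m : ℝ := Finset.univ.inf' Finset.univ_nonempty (fun r => d p r) with hm
    have hm0 : 0 < m := by
      rw [hm, Finset.lt_inf'_iff]
      exact fun r _ => hd p r
    set ε : ℝ := min (g p l0) ((∑ l, g p l - μ)/2) with hε
    have hε0 : 0 < ε := lt_min hl0 (by linarith)
    have hεle1 : ε ≤ g p l0 := by rw [hε]; exact min_le_left _ _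
    have hεle2 : ε ≤ (∑ l, g p l - μ)/2 := by rw [hε]; exact min_le_right _ _
    set δ : ℝ := ε * m / N with hδ
    have hδ0 : 0 < δ := by positivity
    set g' : U → S → ℝ :=
      fun k l => g k l + (if l = l0 then (if k = p then -ε else δ) else 0) with hg'
    have hdsum : ∀ r, (∑ k, d k r) ≤ N := by
      intro r
      calc ∑ k, d k r ≤ ∑ _k : U, (1:ℝ) := Finset.sum_le_sum fun k _ => hd1 k r
        _ = N := by simp [hN]
    -- nonnegativity
    have h1 : ∀ k l, 0 ≤ g' k l := by
      intro k l
      simp only [hg']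
      split_ifs with h h'
      · rw [h, h']
        linarith [hg p l0]
      · linarith [hg k l, hδ0.le]
      · simpa using hg k l
    -- feasibility
    have h2 : ∀ l r, (∑ k, g' k l * d k r) ≤ c l r := by
      intro l r
      by_cases hl : l = l0
      · subst hl
        have step : ∀ k, g' k l * d k r
            = g k l * d k r + (δ * d k r + (if k = p then (-ε - δ) * d k r else 0)) := by
          intro k
          simp only [hg', if_pos (rfl : l = l)]
          by_cases hk : k = p <;> simp [hk] <;> ring
        rw [Finset.sum_congr rfl fun k _ => step k, Finset.sum_add_distrib,
          Finset.sum_add_distrib, Finset.sum_ite_eq' Finset.univ p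
            (fun k => (-ε - δ) * d k r), if_pos (Finset.mem_univ p)]
        have b1 : (∑ k, δ * d k r) ≤ ε * m := by
          rw [← Finset.mul_sum]
          calc δ * ∑ k, d k r ≤ δ * N :=
                mul_le_mul_of_nonneg_left (hdsum r) hδ0.le
            _ = ε * m := by rw [hδ]; field_simp
        have b2 : ε * m ≤ ε * d p r := by
          refine mul_le_mul_of_nonneg_left ?_ hε0.le
          rw [hm]; exact Finset.inf'_le _ (Finset.mem_univ r)
        have b3 : 0 ≤ δ * d p r := mul_nonneg hδ0.le (hd p r).le
        have hf := hfeas l r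
        nlinarith
      · have step : ∀ k, g' k l = g k l := by
          intro k; simp only [hg', if_neg hl, add_zero]
        rw [Finset.sum_congr rfl fun k _ => by rw [step k]]
        exact hfeas l r
    -- new totals
    have htot : ∀ k, (∑ l, g' k l) = (∑ l, g k l) + (if k = p then -ε else δ) := by
      intro k
      simp only [hg']
      rw [Finset.sum_add_distrib, Finset.sum_ite_eq' Finset.univ l0
        (fun _ => if k = p then -ε else δ), if_pos (Finset.mem_univ l0)]
    have hmin : μ < Finset.univ.inf' Finset.univ_nonempty (fun k => ∑ l, g' k l) := by
      rw [Finset.lt_inf'_iff]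
      intro k _
      rw [htot k]
      by_cases hk : k = p
      · rw [if_pos hk, hk]
        linarith
      · rw [if_neg hk]
        have h4 : μ ≤ ∑ l, g k l := by
          rw [hμ]; exact Finset.inf'_le _ (Finset.mem_univ k)
        linarith
    have hcon := hopt g' h1 h2
    linarith
  -- RHS equals total of i
  have hRHS : (∑ l, Finset.univ.inf' Finset.univ_nonempty (fun r => (g i l * d i r) / d i r))
      = ∑ l, g i l := by
    refine Finset.sum_congr rfl fun l _ => ?_
    have hc : ∀ r : R, (g i l * d i r) / d i r = g i l := fun r => by
      rw [mul_div_assoc, div_self (hd i r).ne', mul_one]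
    calc Finset.univ.inf' Finset.univ_nonempty (fun r => (g i l * d i r) / d i r)
        = Finset.univ.inf' Finset.univ_nonempty (fun _ : R => g i l) :=
          Finset.inf'_congr Finset.univ_nonempty rfl (fun r _ => hc r)
      _ = g i l := Finset.inf'_const _ _
  -- LHS is at most total of j
  have hLHS : (∑ l, Finset.univ.inf' Finset.univ_nonempty (fun r => (g j l * d j r) / d i r))
      ≤ ∑ l, g j l := by
    refine Finset.sum_le_sum fun l _ => ?_
    obtain ⟨r0, hr0⟩ := hdmax i
    calc Finset.univ.inf' Finset.univ_nonempty (fun r => (g j l * d j r) / d i r)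
        ≤ (g j l * d j r0) / d i r0 := Finset.inf'_le _ (Finset.mem_univ r0)
      _ = g j l * d j r0 := by rw [hr0, div_one]
      _ ≤ g j l * 1 := mul_le_mul_of_nonneg_left (hd1 j r0) (hg j l)
      _ = g j l := mul_one _
  have hij : (∑ l, g j l) ≤ ∑ l, g i l := by
    have h5 : μ ≤ ∑ l, g i l := by
      rw [hμ]; exact Finset.inf'_le _ (Finset.mem_univ i)
    exact (key j).trans h5
  rw [hRHS]
  exact hLHS.trans hij
end

section
/- The two optimization problems are equivalent: maximizing min_{i∈U} Σ_{l∈S} g_il subject to Σ_i g_il d_ir ≤ c_lr for all l, r, has the same optimal value as maximizing g subject to Σ_i g_il d_ir ≤ c_lr for all l, r and Σ_l g_il = g for every user i; moreover any optimal solution of the second is optimal for the first. -/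
private lemma stmt7_aux {U S R : Type*} [Fintype U] [Nonempty U] [Fintype S] [Nonempty S]
    [Fintype R]
    (d : U → R → ℝ) (hd : ∀ i r, 0 < d i r)
    (c : S → R → ℝ)
    (g : U → S → ℝ) (hg0 : ∀ i l, 0 ≤ g i l)
    (hgc : ∀ l r, ∑ i, g i l * d i r ≤ c l r) :
    ∃ g' : U → S → ℝ, (∀ i l, 0 ≤ g' i l) ∧
      (∀ l r, ∑ i, g' i l * d i r ≤ c l r) ∧
      ∀ i, ∑ l, g' i l = Finset.univ.inf' Finset.univ_nonempty (fun i => ∑ l, g i l) := by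
  set m := Finset.univ.inf' Finset.univ_nonempty (fun i => ∑ l, g i l) with hm
  have hm0 : 0 ≤ m := Finset.le_inf' _ _ (fun i _ => Finset.sum_nonneg fun l _ => hg0 i l)
  have hms : ∀ i, m ≤ ∑ l, g i l := fun i => Finset.inf'_le _ (Finset.mem_univ i)
  refine ⟨fun i l => if (∑ l, g i l) = 0 then 0 else g i l * (m / ∑ l, g i l), ?_, ?_, ?_⟩
  · intro i l
    dsimp only
    split
    · exact le_rfl
    · exact mul_nonneg (hg0 i l)
        (div_nonneg hm0 (Finset.sum_nonneg fun l _ => hg0 i l))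
  · intro l r
    dsimp only
    refine le_trans (Finset.sum_le_sum fun i _ => ?_) (hgc l r)
    have hle : (if (∑ l, g i l) = 0 then 0 else g i l * (m / ∑ l, g i l)) ≤ g i l := by
      split
      · exact hg0 i l
      · rename_i h
        have hs : 0 < ∑ l, g i l :=
          lt_of_le_of_ne (Finset.sum_nonneg fun l _ => hg0 i l) (Ne.symm h)
        calc g i l * (m / ∑ l, g i l) ≤ g i l * 1 := by
              exact mul_le_mul_of_nonneg_left ((div_le_one hs).2 (hms i)) (hg0 i l)
          _ = g i l := mul_one _
    exact mul_le_mul_of_nonneg_right hle (hd i r).le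
  · intro i
    dsimp only
    by_cases h : (∑ l, g i l) = 0
    · simp only [h, if_true, Finset.sum_const_zero]
      have := hms i
      rw [h] at this
      linarith
    · simp only [h, if_false]
      rw [← Finset.sum_mul, mul_div_cancel₀ _ h]

/-- Equivalence of the max-min program (maximize `min_i Σ_l g i l`)
and the equalized program (maximize `g` with `Σ_l g i l = g` for all `i`), both
subject to `Σ_i g i l * d i r ≤ c l r`: same optimal value, and any optimal
solution of the second is optimal for the first. -/
theorem stmt7 {U S R : Type*} [Fintype U] [Nonempty U] [Fintype S] [Nonempty S]
    [Fintype R] [Nonempty R]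
    (d : U → R → ℝ) (hd : ∀ i r, 0 < d i r) (hd1 : ∀ i r, d i r ≤ 1)
    (c : S → R → ℝ) (hc : ∀ l r, 0 < c l r) :
    sSup {v : ℝ | ∃ g : U → S → ℝ, (∀ i l, 0 ≤ g i l) ∧
        (∀ l r, ∑ i, g i l * d i r ≤ c l r) ∧
        v = Finset.univ.inf' Finset.univ_nonempty (fun i => ∑ l, g i l)} =
      sSup {v : ℝ | ∃ g : U → S → ℝ, (∀ i l, 0 ≤ g i l) ∧
        (∀ l r, ∑ i, g i l * d i r ≤ c l r) ∧ ∀ i, ∑ l, g i l = v}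
    ∧ ∀ (g : U → S → ℝ) (v : ℝ), (∀ i l, 0 ≤ g i l) →
        (∀ l r, ∑ i, g i l * d i r ≤ c l r) → (∀ i, ∑ l, g i l = v) →
        (∀ (g' : U → S → ℝ) (v' : ℝ), (∀ i l, 0 ≤ g' i l) →
          (∀ l r, ∑ i, g' i l * d i r ≤ c l r) → (∀ i, ∑ l, g' i l = v') → v' ≤ v) →
        ∀ g'' : U → S → ℝ, (∀ i l, 0 ≤ g'' i l) →
          (∀ l r, ∑ i, g'' i l * d i r ≤ c l r) →
          Finset.univ.inf' Finset.univ_nonempty (fun i => ∑ l, g'' i l) ≤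
            Finset.univ.inf' Finset.univ_nonempty (fun i => ∑ l, g i l) := by
  have hconst : ∀ (g : U → S → ℝ) (v : ℝ), (∀ i, ∑ l, g i l = v) →
      Finset.univ.inf' Finset.univ_nonempty (fun i => ∑ l, g i l) = v := by
    intro g v hv
    apply le_antisymm
    · obtain ⟨i⟩ := (inferInstance : Nonempty U)
      exact le_of_le_of_eq (Finset.inf'_le _ (Finset.mem_univ i)) (hv i)
    · exact Finset.le_inf' _ _ fun i _ => (hv i).ge
  have hsetEq : {v : ℝ | ∃ g : U → S → ℝ, (∀ i l, 0 ≤ g i l) ∧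
        (∀ l r, ∑ i, g i l * d i r ≤ c l r) ∧
        v = Finset.univ.inf' Finset.univ_nonempty (fun i => ∑ l, g i l)} =
      {v : ℝ | ∃ g : U → S → ℝ, (∀ i l, 0 ≤ g i l) ∧
        (∀ l r, ∑ i, g i l * d i r ≤ c l r) ∧ ∀ i, ∑ l, g i l = v} := by
    ext v
    constructor
    · rintro ⟨g, hg0, hgc, rfl⟩
      obtain ⟨g', h1, h2, h3⟩ := stmt7_aux d hd c g hg0 hgc
      exact ⟨g', h1, h2, h3⟩
    · rintro ⟨g, hg0, hgc, hv⟩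
      exact ⟨g, hg0, hgc, (hconst g v hv).symm⟩
  refine ⟨by rw [hsetEq], ?_⟩
  intro g v hg0 hgc hgv hopt g'' hg0'' hgc''
  obtain ⟨g3, h1, h2, h3⟩ := stmt7_aux d hd c g'' hg0'' hgc''
  rw [hconst g v hgv]
  exact hopt g3 _ h1 h2 h3
end

section
/- The DRFH allocation is Pareto optimal: if {g_il} with value g = min_i Σ_l g_il is optimal for the max-min program, then there is no feasible allocation A' such that every user's global dominant share under A' is at least that under A = (g_il d_i) and some user's is strictly greater. -/
private lemma inf'_add_const' {α : Type*} [Fintype α] (hne : (Finset.univ : Finset α).Nonempty)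
    (f : α → ℝ) (a : ℝ) :
    Finset.univ.inf' hne (fun x => f x + a) = Finset.univ.inf' hne f + a := by
  apply le_antisymm
  · obtain ⟨x, hx, hfx⟩ := Finset.exists_mem_eq_inf' hne f
    calc Finset.univ.inf' hne (fun x => f x + a) ≤ f x + a := Finset.inf'_le _ hx
      _ = _ := by rw [← hfx]
  · apply Finset.le_inf'
    intro x hx
    have h1 : Finset.univ.inf' hne f ≤ f x := Finset.inf'_le _ hx
    linarith

/-- Pareto optimality of DRFH: if `{g i l}` is optimal for the
max-min program (with allocations `A i l r = g i l * d i r`), then there is no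
feasible allocation `A'` under which every user's global dominant share is at least
that under `A` and some user's is strictly greater. -/
theorem stmt8 {U S R : Type*} [Fintype U] [Nonempty U] [Fintype S] [Nonempty S]
    [Fintype R] [Nonempty R]
    (d : U → R → ℝ) (hd : ∀ i r, 0 < d i r) (hd1 : ∀ i r, d i r ≤ 1)
    (hdmax : ∀ i, ∃ r, d i r = 1)
    (c : S → R → ℝ)
    (g : U → S → ℝ) (hg : ∀ i l, 0 ≤ g i l)
    (hfeas : ∀ l r, ∑ i, g i l * d i r ≤ c l r)
    (hopt : ∀ A' : U → S → R → ℝ, (∀ i l r, 0 ≤ A' i l r) →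
      (∀ l r, ∑ i, A' i l r ≤ c l r) →
      Finset.univ.inf' Finset.univ_nonempty
          (fun i => ∑ l, Finset.univ.inf' Finset.univ_nonempty (fun r => A' i l r / d i r)) ≤
        Finset.univ.inf' Finset.univ_nonempty
          (fun i => ∑ l, Finset.univ.inf' Finset.univ_nonempty
            (fun r => (g i l * d i r) / d i r))) :
    ¬ ∃ A' : U → S → R → ℝ, (∀ i l r, 0 ≤ A' i l r) ∧
        (∀ l r, ∑ i, A' i l r ≤ c l r) ∧
        (∀ i, ∑ l, Finset.univ.inf' Finset.univ_nonempty (fun r => (g i l * d i r) / d i r) ≤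
          ∑ l, Finset.univ.inf' Finset.univ_nonempty (fun r => A' i l r / d i r)) ∧
        ∃ j, ∑ l, Finset.univ.inf' Finset.univ_nonempty (fun r => (g j l * d j r) / d j r) <
          ∑ l, Finset.univ.inf' Finset.univ_nonempty (fun r => A' j l r / d j r) := by
  classical
  rintro ⟨A', hA0, hAc, hge, j, hj⟩
  have hconst : ∀ i l, (Finset.univ.inf' Finset.univ_nonempty
      (fun r => (g i l * d i r) / d i r)) = g i l := by
    intro i l
    have h : (fun r : R => (g i l * d i r) / d i r) = fun _ => g i l := by
      funext r
      exact mul_div_cancel_right₀ _ (ne_of_gt (hd i r))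
    rw [h, Finset.inf'_const]
  simp only [hconst] at hge hj hopt
  set G : U → S → ℝ :=
    fun i l => Finset.univ.inf' Finset.univ_nonempty (fun r => A' i l r / d i r) with hG
  set v : ℝ := Finset.univ.inf' Finset.univ_nonempty (fun i => ∑ l, g i l) with hv
  have hG0 : ∀ i l, 0 ≤ G i l := by
    intro i l
    apply Finset.le_inf'
    intro r _
    exact div_nonneg (hA0 i l r) (le_of_lt (hd i r))
  have hGle : ∀ i l r, G i l * d i r ≤ A' i l r := by
    intro i l r
    have h1 : G i l ≤ A' i l r / d i r := Finset.inf'_le _ (Finset.mem_univ r)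
    calc G i l * d i r ≤ (A' i l r / d i r) * d i r :=
          mul_le_mul_of_nonneg_right h1 (le_of_lt (hd i r))
      _ = A' i l r := div_mul_cancel₀ _ (ne_of_gt (hd i r))
  have hv0 : 0 ≤ v := by
    apply Finset.le_inf'
    intro i _
    exact Finset.sum_nonneg fun l _ => hg i l
  have hvle : ∀ i, v ≤ ∑ l, g i l := fun i => Finset.inf'_le _ (Finset.mem_univ i)
  have hjpos : v < ∑ l, G j l := lt_of_le_of_lt (hvle j) hj
  have hex : ∃ l0, 0 < G j l0 := by
    by_contra h
    push_neg at h
    have : ∑ l, G j l ≤ 0 := Finset.sum_nonpos fun l _ => h l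
    linarith
  obtain ⟨l0, hl0⟩ := hex
  set dmin : ℝ := Finset.univ.inf' Finset.univ_nonempty (fun r => d j r) with hdmin_def
  have hdmin : 0 < dmin := by
    rw [hdmin_def, Finset.lt_inf'_iff]
    intro r _
    exact hd j r
  have hdmin_le : ∀ r, dmin ≤ d j r := fun r => Finset.inf'_le _ (Finset.mem_univ r)
  set η : ℝ := min (G j l0) ((∑ l, G j l - v) / 2) with hη_def
  have hη : 0 < η := lt_min hl0 (by linarith)
  have hη1 : η ≤ G j l0 := min_le_left _ _
  have hη2 : η ≤ (∑ l, G j l - v) / 2 := min_le_right _ _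
  have hcardpos : (0 : ℝ) < (Fintype.card U : ℝ) := by
    exact_mod_cast Fintype.card_pos
  set ε : ℝ := η * dmin / (Fintype.card U) with hε_def
  have hε : 0 < ε := div_pos (mul_pos hη hdmin) hcardpos
  set e : U → ℝ := fun i => if i = j then ε - η else ε with he_def
  set A'' : U → S → R → ℝ :=
    fun i l r => A' i l r + (if l = l0 then e i * d i r else 0) with hA''_def
  -- nonnegativity
  have hA''0 : ∀ i l r, 0 ≤ A'' i l r := by
    intro i l r
    by_cases hl : l = l0
    · by_cases hi : i = j
      · have h1 := hGle j l0 r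
        have h2 := hd j r
        simp only [hA''_def, he_def, hi, hl, if_true, eq_self_iff_true, ite_true]
        nlinarith [mul_nonneg (sub_nonneg.mpr hη1) h2.le, mul_pos hε h2]
      · simp only [hA''_def, he_def, hl, if_true, eq_self_iff_true, ite_true, if_neg hi]
        have h3 := hA0 i l0 r
        nlinarith [mul_pos hε (hd i r)]
    · simp only [hA''_def, if_neg hl, add_zero]
      exact hA0 i l r
  -- capacity
  have hA''c : ∀ l r, ∑ i, A'' i l r ≤ c l r := by
    intro l r
    by_cases hl : l = l0
    · rw [hl]
      have hsplit : ∑ i, A'' i l0 r = ∑ i, A' i l0 r + (ε * ∑ i, d i r - η * d j r) := by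
        have hpt : ∀ i : U, A'' i l0 r
            = A' i l0 r + (ε * d i r - (if i = j then η * d j r else 0)) := by
          intro i
          by_cases hi : i = j
          · subst hi; simp only [hA''_def, he_def, if_true, eq_self_iff_true, ite_true]; ring
          · simp [hA''_def, he_def, hi]
        rw [Finset.sum_congr rfl (fun i _ => hpt i), Finset.sum_add_distrib,
          Finset.sum_sub_distrib,
          Finset.sum_ite_eq' Finset.univ j (fun _ => η * d j r), if_pos (Finset.mem_univ j),
          ← Finset.mul_sum]
      rw [hsplit]
      have hsd : ∑ i, d i r ≤ (Fintype.card U : ℝ) := by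
        calc ∑ i, d i r ≤ ∑ _i : U, (1 : ℝ) := Finset.sum_le_sum fun i _ => hd1 i r
          _ = (Fintype.card U : ℝ) := by simp
      have h1 : ε * ∑ i, d i r ≤ η * dmin := by
        calc ε * ∑ i, d i r ≤ ε * (Fintype.card U : ℝ) :=
              mul_le_mul_of_nonneg_left hsd (le_of_lt hε)
          _ = η * dmin := by rw [hε_def]; field_simp
      have h2 : η * dmin ≤ η * d j r := mul_le_mul_of_nonneg_left (hdmin_le r) (le_of_lt hη)
      have h3 := hAc l0 r
      linarith
    · simp only [hA''_def, if_neg hl, add_zero]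
      exact hAc l r
  -- shares under A''
  have hshare : ∀ i, ∑ l, Finset.univ.inf' Finset.univ_nonempty (fun r => A'' i l r / d i r)
      = ∑ l, G i l + e i := by
    intro i
    have hterm : ∀ l, Finset.univ.inf' Finset.univ_nonempty (fun r => A'' i l r / d i r)
        = G i l + (if l = l0 then e i else 0) := by
      intro l
      by_cases hl : l = l0
      · rw [hl, if_pos rfl]
        have hfun : (fun r => A'' i l0 r / d i r) = fun r => A' i l0 r / d i r + e i := by
          funext r
          simp only [hA''_def, if_true, eq_self_iff_true, ite_true]
          rw [add_div, mul_div_assoc, div_self (ne_of_gt (hd i r)), mul_one]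
        rw [hfun, inf'_add_const']
      · rw [if_neg hl]
        have hfun : (fun r => A'' i l r / d i r) = fun r => A' i l r / d i r := by
          funext r
          simp only [hA''_def, if_neg hl, add_zero]
        rw [hfun, hG, add_zero]
    rw [Finset.sum_congr rfl (fun l _ => hterm l), Finset.sum_add_distrib,
      Finset.sum_ite_eq' Finset.univ l0 (fun _ => e i), if_pos (Finset.mem_univ l0)]
  -- every user is strictly above v under A''
  have hstrict : ∀ i, v < ∑ l, Finset.univ.inf' Finset.univ_nonempty
      (fun r => A'' i l r / d i r) := by
    intro i
    rw [hshare i]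
    by_cases hi : i = j
    · subst hi
      simp only [he_def, if_pos rfl]
      linarith
    · simp only [he_def, if_neg hi]
      have h1 := hge i
      have h2 := hvle i
      linarith
  have hopt' := hopt A'' hA''0 hA''c
  obtain ⟨i0, hi0mem, hi0⟩ := Finset.exists_mem_eq_inf' (Finset.univ_nonempty (α := U))
    (fun i => ∑ l, Finset.univ.inf' Finset.univ_nonempty (fun r => A'' i l r / d i r))
  have h1 := hstrict i0
  rw [← hi0] at h1
  linarith
end

section
/- Case 1 of the truthfulness proof: if user i misreports demand d'_i and receives allocation A'_il = g'_il d'_i with total reported share g' = Σ_l g'_il at most the truthful share g, then its true dominant share satisfies G_i(A'_i) = ρ_i g' ≤ g, where ρ_i = min_r d'_ir / d_ir ≤ 1. -/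
lemma const_mul_inf' {R : Type*} [Fintype R] [Nonempty R] (c : ℝ) (hc : 0 ≤ c)
    (f : R → ℝ) :
    Finset.univ.inf' Finset.univ_nonempty (fun r => c * f r) =
      c * Finset.univ.inf' Finset.univ_nonempty f := by
  obtain ⟨r0, -, h0⟩ := Finset.exists_mem_eq_inf' (Finset.univ_nonempty (α := R)) f
  apply le_antisymm
  · rw [h0]
    exact Finset.inf'_le _ (Finset.mem_univ r0)
  · apply Finset.le_inf'
    intro r _
    exact mul_le_mul_of_nonneg_left (Finset.inf'_le _ (Finset.mem_univ r)) hc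

/-- Case 1 of the truthfulness proof: if user `i` misreports demand
`d'` and receives allocation `A' l = g' l • d'` with total reported share
`Σ_l g' l ≤ g`, then its true dominant share satisfies
`G_i(A') = ρ * Σ_l g' l ≤ g`, where `ρ = min_r d' r / d r ≤ 1`. -/
theorem stmt11 {S R : Type*} [Fintype S] [Nonempty S] [Fintype R] [Nonempty R]
    (d d' : R → ℝ) (hd : ∀ r, 0 < d r) (hd' : ∀ r, 0 < d' r)
    (hd1 : ∀ r, d r ≤ 1) (hd'1 : ∀ r, d' r ≤ 1)
    (rs : R) (hrs : d rs = 1) (rs' : R) (hrs' : d' rs' = 1)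
    (g' : S → ℝ) (hg' : ∀ l, 0 ≤ g' l) (g : ℝ)
    (hle : ∑ l, g' l ≤ g) :
    (∑ l, Finset.univ.inf' Finset.univ_nonempty (fun r => (g' l * d' r) / d r)) =
        (Finset.univ.inf' Finset.univ_nonempty (fun r => d' r / d r)) * ∑ l, g' l ∧
    Finset.univ.inf' Finset.univ_nonempty (fun r => d' r / d r) ≤ 1 ∧
    (∑ l, Finset.univ.inf' Finset.univ_nonempty (fun r => (g' l * d' r) / d r)) ≤ g := by
  set ρ := Finset.univ.inf' Finset.univ_nonempty (fun r => d' r / d r) with hρ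
  have key : ∀ l, Finset.univ.inf' Finset.univ_nonempty (fun r => (g' l * d' r) / d r)
      = g' l * ρ := by
    intro l
    rw [hρ, ← const_mul_inf' (g' l) (hg' l)]
    congr 1; ext r; ring
  have h1 : (∑ l, Finset.univ.inf' Finset.univ_nonempty (fun r => (g' l * d' r) / d r))
      = ρ * ∑ l, g' l := by
    simp only [key]
    rw [Finset.mul_sum]
    exact Finset.sum_congr rfl (fun l _ => mul_comm _ _)
  have hρ1 : ρ ≤ 1 := by
    calc ρ ≤ d' rs / d rs := Finset.inf'_le _ (Finset.mem_univ rs)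
    _ ≤ 1 := by rw [hrs]; simpa using hd'1 rs
  refine ⟨h1, hρ1, ?_⟩
  rw [h1]
  have hs : 0 ≤ ∑ l, g' l := Finset.sum_nonneg fun l _ => hg' l
  calc ρ * ∑ l, g' l ≤ 1 * ∑ l, g' l := mul_le_mul_of_nonneg_right hρ1 hs
  _ ≤ g := by simpa using hle
end

section
/- The DRFH allocation satisfies population monotonicity: if user j leaves the system and DRFH is recomputed for the remaining users, the optimal equalized global dominant share g' of the new program is at least the original share g, so every remaining user schedules at least as many tasks. -/
/-- Population monotonicity of DRFH: if user `j` leaves and the DRFH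
program is re-solved over the remaining users, the optimal equalized global dominant
share `gv'` is at least the original `gv`. -/
theorem stmt12 {U S R : Type*} [Fintype U] [Nonempty U] [DecidableEq U]
    [Fintype S] [Nonempty S] [Fintype R] [Nonempty R]
    (d : U → R → ℝ) (hd : ∀ i r, 0 < d i r)
    (c : S → R → ℝ) (hc : ∀ l r, 0 ≤ c l r)
    (j : U)
    (g : U → S → ℝ) (gv : ℝ) (hg : ∀ i l, 0 ≤ g i l)
    (hfeas : ∀ l r, ∑ i, g i l * d i r ≤ c l r)
    (heq : ∀ i, ∑ l, g i l = gv)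
    (hopt : ∀ (h : U → S → ℝ) (v : ℝ), (∀ i l, 0 ≤ h i l) →
      (∀ l r, ∑ i, h i l * d i r ≤ c l r) → (∀ i, ∑ l, h i l = v) → v ≤ gv)
    (g' : {i : U // i ≠ j} → S → ℝ) (gv' : ℝ) (hg' : ∀ i l, 0 ≤ g' i l)
    (hfeas' : ∀ l r, ∑ i : {i : U // i ≠ j}, g' i l * d i.1 r ≤ c l r)
    (heq' : ∀ i, ∑ l, g' i l = gv')
    (hopt' : ∀ (h : {i : U // i ≠ j} → S → ℝ) (v : ℝ), (∀ i l, 0 ≤ h i l) →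
      (∀ l r, ∑ i : {i : U // i ≠ j}, h i l * d i.1 r ≤ c l r) →
      (∀ i, ∑ l, h i l = v) → v ≤ gv') :
    gv ≤ gv' := by
  apply hopt' (fun i l => g i.1 l) gv (fun i l => hg i.1 l) _ (fun i => heq i.1)
  intro l r
  refine le_trans ?_ (hfeas l r)
  calc ∑ i : {i : U // i ≠ j}, g i.1 l * d i.1 r
      = ∑ i ∈ Finset.univ.filter (· ≠ j), g i l * d i r :=
        (Finset.sum_subtype _ (fun i => by simp) (fun i => g i l * d i r)).symm
    _ ≤ ∑ i : U, g i l * d i r :=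
        Finset.sum_le_sum_of_subset_of_nonneg (Finset.filter_subset _ _)
          (fun i _ _ => mul_nonneg (hg i l) (hd i r).le)
end
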